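/- The ball B(4) is contained in the toric domain X₀ over Ω₀, and the ellipsoid E(3√3, 3√3/2) is contained in X₀; equivalently, in moment-map coordinates, the triangle {x + y ≤ 4, x,y ≥ 0} and the triangle {x/(3√3) + 2y/(3√3) ≤ 1, x,y ≥ 0} are both contained in Ω₀. -/

import Mathlib

/-!
The supporting lines of Ω₀ come from the tangent-line inequality for `sin` on `[0, π]`:
writing `t = α/2`, one has `x(α) + p y(α) = 2(1+p) (sin t + (s - t) cos t)` with
`s = pπ/(1+p)`, and concavity of `sin` bounds this below by `2(1+p) sin s`.
For `p = 1` this is `4`, for `p = 2` it is `6 sin(2π/3) = 3√3`.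
Since `x` runs continuously from `x(0) = 0` to `x(2π) = 2π`, every point of the first quadrant
below such a line lies below a point of the curve.
-/

open Real

/-- The region Ω₀ bounded by the coordinate axes and the curve
γ(α) = (2sin(α/2) − α cos(α/2), 2sin(α/2) + (2π − α)cos(α/2)): a point of the
first quadrant lies in Ω₀ iff it is (weakly) below some point of the curve. -/
def Omega0 : Set (ℝ × ℝ) :=
  {z | 0 ≤ z.1 ∧ 0 ≤ z.2 ∧ ∃ α ∈ Set.Icc (0:ℝ) (2*π),
    z.1 ≤ 2 * Real.sin (α/2) - α * Real.cos (α/2) ∧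
    z.2 ≤ 2 * Real.sin (α/2) + (2*π - α) * Real.cos (α/2)}

open Set

lemma ConcaveOn.le_add_mul_sub_of_hasDerivAt {S : Set ℝ} {f : ℝ → ℝ} {x y f' : ℝ}
    (hfc : ConcaveOn ℝ S f) (hx : x ∈ S) (hy : y ∈ S) (hf' : HasDerivAt f f' x) :
    f y ≤ f x + f' * (y - x) := by
  rcases lt_trichotomy y x with hyx | rfl | hxy
  · have := hfc.le_slope_of_hasDerivAt hy hx hyx hf'
    rw [slope_def_field, le_div_iff₀ (sub_pos.2 hyx)] at this
    linarith
  · simp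
  · have := hfc.slope_le_of_hasDerivAt hx hy hxy hf'
    rw [slope_def_field, div_le_iff₀ (sub_pos.2 hxy)] at this
    linarith

lemma Real.sin_le_sin_add_cos_mul_sub {s t : ℝ} (hs : s ∈ Icc 0 π) (ht : t ∈ Icc 0 π) :
    sin s ≤ sin t + cos t * (s - t) :=
  strictConcaveOn_sin_Icc.concaveOn.le_add_mul_sub_of_hasDerivAt ht hs (hasDerivAt_sin t)

noncomputable def omegaCurveX (α : ℝ) : ℝ := 2 * sin (α / 2) - α * cos (α / 2)

noncomputable def omegaCurveY (α : ℝ) : ℝ := 2 * sin (α / 2) + (2 * π - α) * cos (α / 2)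

lemma omegaCurveX_two_pi : omegaCurveX (2 * π) = 2 * π := by
  simp [omegaCurveX, mul_div_cancel_left₀ π two_ne_zero]

lemma omegaCurveY_two_pi : omegaCurveY (2 * π) = 0 := by
  simp [omegaCurveY, mul_div_cancel_left₀ π two_ne_zero]

lemma exists_omegaCurveX_eq {c : ℝ} (hc : c ∈ Icc 0 (2 * π)) :
    ∃ α ∈ Icc 0 (2 * π), omegaCurveX α = c := by
  have hcont : ContinuousOn omegaCurveX (Icc 0 (2 * π)) := by
    unfold omegaCurveX; fun_prop
  have := intermediate_value_Icc (by positivity) hcont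
  rw [omegaCurveX_two_pi, show omegaCurveX 0 = 0 by simp [omegaCurveX]] at this
  exact this hc

lemma mem_Omega0_of_le_of_forall_le_curve {p c : ℝ} (hp : 0 < p)
    (hcurve : ∀ α ∈ Icc 0 (2 * π), c ≤ omegaCurveX α + p * omegaCurveY α)
    {z : ℝ × ℝ} (hz₁ : 0 ≤ z.1) (hz₂ : 0 ≤ z.2) (hz : z.1 + p * z.2 ≤ c) : z ∈ Omega0 := by
  have hc : c ≤ 2 * π := by
    simpa [omegaCurveX_two_pi, omegaCurveY_two_pi] using
      hcurve (2 * π) ⟨by positivity, le_rfl⟩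
  obtain ⟨α, hα, hxα⟩ :=
    exists_omegaCurveX_eq ⟨hz₁, by linarith [mul_nonneg hp.le hz₂]⟩
  refine ⟨hz₁, hz₂, α, hα, hxα.ge, ?_⟩
  show z.2 ≤ omegaCurveY α
  have := hcurve α hα
  exact le_of_mul_le_mul_left (by linarith) hp

lemma le_omegaCurveX_add_mul_omegaCurveY {p α : ℝ} (hp : 0 ≤ p) (hα : α ∈ Icc 0 (2 * π)) :
    2 * (1 + p) * sin (p * π / (1 + p)) ≤ omegaCurveX α + p * omegaCurveY α := by
  have hs : p * π / (1 + p) ∈ Icc 0 π := by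
    constructor
    · positivity
    · rw [div_le_iff₀ (by positivity)]; nlinarith [pi_pos]
  have ht : α / 2 ∈ Icc 0 π := ⟨by linarith [hα.1], by linarith [hα.2]⟩
  calc 2 * (1 + p) * sin (p * π / (1 + p))
      ≤ 2 * (1 + p) * (sin (α / 2) + cos (α / 2) * (p * π / (1 + p) - α / 2)) :=
        mul_le_mul_of_nonneg_left (sin_le_sin_add_cos_mul_sub hs ht) (by positivity)
    _ = omegaCurveX α + p * omegaCurveY α := by
        unfold omegaCurveX omegaCurveY
        field_simp
        ring

theorem stmt17 :
    (∀ z : ℝ × ℝ, 0 ≤ z.1 → 0 ≤ z.2 → z.1 + z.2 ≤ 4 → z ∈ Omega0) ∧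
    (∀ z : ℝ × ℝ, 0 ≤ z.1 → 0 ≤ z.2 →
      z.1 / (3 * Real.sqrt 3) + 2 * z.2 / (3 * Real.sqrt 3) ≤ 1 → z ∈ Omega0) := by
  constructor
  · intro z hz₁ hz₂ hz
    refine mem_Omega0_of_le_of_forall_le_curve one_pos (c := 4) (fun α hα => ?_) hz₁ hz₂
      (by linarith)
    have := le_omegaCurveX_add_mul_omegaCurveY zero_le_one hα
    rwa [show 2 * (1 + 1 : ℝ) * sin (1 * π / (1 + 1)) = 4 by norm_num] at this
  · intro z hz₁ hz₂ hz
    have h3 : (0 : ℝ) < 3 * √3 := by positivity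
    refine mem_Omega0_of_le_of_forall_le_curve two_pos (c := 3 * √3) (fun α hα => ?_) hz₁ hz₂
      (by rwa [← add_div, div_le_one h3] at hz)
    have := le_omegaCurveX_add_mul_omegaCurveY zero_le_two hα
    rwa [show 2 * π / (1 + 2) = π - π / 3 by ring, sin_pi_sub, sin_pi_div_three,
      show 2 * (1 + 2 : ℝ) * (√3 / 2) = 3 * √3 by ring] at this
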